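/- The set of points of continuity of κ₂ coincides exactly with its zero set C₂ := { x ∈ [0,1] : κ₂(x) = 0 }; that is, κ₂ is continuous at x if and only if κ₂(x) = 0. -/

import Mathlib

/-!
A word has infinite critical exponent iff it contains `r`-powers for every `r`, so `κ_b(x) = 0`
iff the digits of `x` contain arbitrarily high powers.

Every `b`-adic rational has `κ_b = 0`, its digits ending in a constant run; these points are
dense, so continuity at `x` forces `κ_b(x) = 0`.

Conversely, an `r`-power in the digits of `x` already occurs in a finite prefix. The digits are
read off the ceilings `⌈x b^k⌉`, which are locally constant to the left of `x`, and also to the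
right unless `x` is `b`-adic; in that case the points just right of `x` have long runs of zeros
in their digits. Either way `κ_b(y) ≤ 1/r` for `y` near `x`.
-/

/-- `u` is a `p/q`-power: `u = x^n ++ y` with `x` nonempty, `y` a prefix of `x`,
`ℓ(u) = p` and `ℓ(x) = q`. -/
def IsPQPower {α : Type*} (u : List α) (p q : ℕ) : Prop :=
  0 < p ∧ 0 < q ∧ u.length = p ∧
    ∃ (x y : List α) (n : ℕ), x ≠ [] ∧ 0 < n ∧ y <+: x ∧ x.length = q ∧
      u = (List.replicate n x).flatten ++ y

/-- `u` is an `s`-power for the rational `s`. -/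
def IsPowerOfExp {α : Type*} (u : List α) (s : ℚ) : Prop :=
  ∃ p q : ℕ, IsPQPower u p q ∧ s = (p : ℚ) / q

/-- the finite word `u` occurs as a (contiguous) subword of the infinite word `w`. -/
def InfOccurs {α : Type*} (u : List α) (w : ℕ → α) : Prop :=
  ∃ i : ℕ, u = (List.range u.length).map fun k => w (i + k)

/-- the finite word `w` contains an `r`-power. -/
def ContainsPowFin {α : Type*} (w : List α) (r : ℚ) : Prop :=
  ∃ u : List α, u <:+: w ∧ ∃ s : ℚ, r ≤ s ∧ IsPowerOfExp u s

/-- the infinite word `w` contains an `r`-power. -/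
def ContainsPowInf {α : Type*} (w : ℕ → α) (r : ℚ) : Prop :=
  ∃ u : List α, InfOccurs u w ∧ ∃ s : ℚ, r ≤ s ∧ IsPowerOfExp u s

open Classical in
/-- critical exponent of a finite word. -/
noncomputable def Efin {α : Type*} (w : List α) : EReal :=
  if w = [] then 0
  else sSup {x : EReal | ∃ r : ℚ, ContainsPowFin w r ∧ x = ((r : ℝ) : EReal)}

/-- critical exponent of an infinite word. -/
noncomputable def Einf {α : Type*} (w : ℕ → α) : EReal :=
  sSup {x : EReal | ∃ r : ℚ, ContainsPowInf w r ∧ x = ((r : ℝ) : EReal)}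

/-- concatenation of a finite and an infinite word. -/
def wordCat {α : Type*} (w : List α) (y : ℕ → α) : ℕ → α :=
  fun n => if h : n < w.length then w[n] else y (n - w.length)

/-- the `k`-th digit of the base-`b` expansion of `x`, choosing for `b`-adic
rationals the expansion whose digits are ultimately `b - 1`. -/
noncomputable def baseDigit (b : ℕ) (x : ℝ) (k : ℕ) : ℕ :=
  if x ≤ 0 then 0
  else (⌈x * b ^ (k + 1)⌉ - b * ⌈x * b ^ k⌉ + ((b : ℤ) - 1)).toNat

/-- the base-`b` critical exponent function `κ_b`, with the convention `1/∞ = 0`. -/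
noncomputable def kappaBase (b : ℕ) (x : ℝ) : ℝ :=
  1 / (Einf (baseDigit b x)).toReal

/-- the `2`-critical exponent function `κ₂`. -/
noncomputable def kappa2 : ℝ → ℝ := kappaBase 2

/-- The Thue–Morse sequence. -/
def tm : ℕ → Fin 2
  | 0 => 0
  | (n + 1) => if (n + 1) % 2 = 0 then tm ((n + 1) / 2) else 1 - tm ((n + 1) / 2)
decreasing_by all_goals omega

/-- the real number whose binary expansion is the Thue–Morse sequence. -/
noncomputable def xtau : ℝ := ∑' i : ℕ, ((tm i : ℕ) : ℝ) / 2 ^ (i + 1)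

open Filter Topology

section Words

variable {α : Type*}

theorem ContainsPowInf.mono {w : ℕ → α} {r r' : ℚ} (h : ContainsPowInf w r) (hr : r' ≤ r) :
    ContainsPowInf w r' :=
  let ⟨u, hu, s, hrs, hs⟩ := h
  ⟨u, hu, s, hr.trans hrs, hs⟩

theorem containsPowInf_of_run {w : ℕ → α} {c : α} {i n : ℕ} (hn : 0 < n)
    (h : ∀ k < n, w (i + k) = c) : ContainsPowInf w n := by
  refine ⟨List.replicate n c, ⟨i, ?_⟩, n, le_rfl, n, 1, ?_, by simp⟩
  · refine List.ext_getElem (by simp) fun k hk _ => ?_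
    simp only [List.length_replicate] at hk
    simp [h k hk]
  · exact ⟨hn, one_pos, by simp, [c], [], n, by simp, hn, List.nil_prefix, rfl, by simp⟩

theorem containsPowInf_of_eventually_const {w : ℕ → α} {c : α} {i : ℕ}
    (h : ∀ k ≥ i, w k = c) (r : ℚ) : ContainsPowInf w r := by
  obtain ⟨n, hn⟩ := exists_nat_gt r
  exact (containsPowInf_of_run (n := n + 1) n.succ_pos fun k _ => h (i + k) (by omega)).mono
    (by push_cast; linarith)

theorem ContainsPowInf.exists_forall_agree {w : ℕ → α} {r : ℚ} (h : ContainsPowInf w r) :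
    ∃ M, ∀ w' : ℕ → α, (∀ k < M, w' k = w k) → ContainsPowInf w' r := by
  obtain ⟨u, ⟨i, hu⟩, s, hrs, hs⟩ := h
  refine ⟨i + u.length, fun w' hw' => ⟨u, ⟨i, ?_⟩, s, hrs, hs⟩⟩
  rw [hu, List.length_map, List.length_range]
  exact List.map_congr_left fun k hk => (hw' _ (by simp at hk; omega)).symm

theorem le_Einf {w : ℕ → α} {r : ℚ} (h : ContainsPowInf w r) : ((r : ℝ) : EReal) ≤ Einf w :=
  le_sSup ⟨r, h, rfl⟩

theorem one_le_Einf (w : ℕ → α) : 1 ≤ Einf w := by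
  simpa using le_Einf (containsPowInf_of_run (w := w) (i := 0) one_pos fun k hk => by
    rw [Nat.lt_one_iff.1 hk])

theorem Einf_eq_top_iff {w : ℕ → α} : Einf w = ⊤ ↔ ∀ r : ℚ, ContainsPowInf w r := by
  refine ⟨fun h r => ?_, fun h => (EReal.eq_top_iff_forall_lt _).2 fun y => ?_⟩
  · obtain ⟨_, ⟨s, hs, rfl⟩, hrs⟩ := lt_sSup_iff.1 (h ▸ EReal.coe_lt_top (r : ℝ))
    exact hs.mono (by exact_mod_cast (EReal.coe_lt_coe_iff.1 hrs).le)
  · obtain ⟨r, hr⟩ := exists_rat_gt y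
    exact (EReal.coe_lt_coe_iff.2 hr).trans_le (le_Einf (h r))

end Words

section Kappa

variable {b : ℕ} {x : ℝ}

theorem kappaBase_nonneg (b : ℕ) (x : ℝ) : 0 ≤ kappaBase b x :=
  one_div_nonneg.2 (EReal.toReal_nonneg ((EReal.coe_nonneg.2 zero_le_one).trans (one_le_Einf _)))

theorem kappaBase_eq_zero_iff : kappaBase b x = 0 ↔ ∀ r : ℚ, ContainsPowInf (baseDigit b x) r := by
  have hpos : 0 < Einf (baseDigit b x) := zero_lt_one.trans_le (one_le_Einf _)
  rw [kappaBase, one_div, inv_eq_zero, EReal.toReal_eq_zero_iff, ← Einf_eq_top_iff]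
  refine ⟨?_, fun h => Or.inr (Or.inl h)⟩
  rintro (h0 | htop | hbot)
  · exact absurd h0 hpos.ne'
  · exact htop
  · exact absurd hbot hpos.ne_bot

theorem kappaBase_le_of_containsPowInf {r : ℚ} (hr : 0 < r)
    (h : ContainsPowInf (baseDigit b x) r) : kappaBase b x ≤ 1 / r := by
  rcases eq_or_ne (Einf (baseDigit b x)) ⊤ with htop | htop
  · simp [kappaBase, htop, hr.le]
  · have hr' : (0 : ℝ) < r := by exact_mod_cast hr
    refine one_div_le_one_div_of_le hr' ?_
    simpa using EReal.toReal_le_toReal (le_Einf h) (EReal.coe_ne_bot _) htop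

end Kappa

section CeilNhds

variable {𝕜 : Type*} [Field 𝕜] [LinearOrder 𝕜] [IsStrictOrderedRing 𝕜] [FloorRing 𝕜]
  [TopologicalSpace 𝕜] [OrderTopology 𝕜] {c : 𝕜}

theorem eventually_ceil_mul_eq_nhdsLE (hc : 0 ≤ c) (x : 𝕜) :
    ∀ᶠ y in 𝓝[≤] x, ⌈y * c⌉ = ⌈x * c⌉ :=
  tendsto_pure.1 <| (tendsto_ceil_left_pure_ceil (x * c)).comp <|
    (continuous_mul_const c).continuousWithinAt.tendsto_nhdsWithin
      fun _ hy => mul_le_mul_of_nonneg_right hy hc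

theorem eventually_ceil_mul_eq_nhdsGT (hc : 0 < c) (x : 𝕜) :
    ∀ᶠ y in 𝓝[>] x, ⌈y * c⌉ = ⌊x * c⌋ + 1 :=
  tendsto_pure.1 <| (tendsto_ceil_right_pure_floor_add_one (x * c)).comp <|
    (continuous_mul_const c).continuousWithinAt.tendsto_nhdsWithin
      fun _ hy => mul_lt_mul_of_pos_right hy hc

end CeilNhds

section Digits

variable {b : ℕ} {x : ℝ}

theorem baseDigit_of_nonpos (hx : x ≤ 0) (k : ℕ) : baseDigit b x k = 0 := if_pos hx

theorem baseDigit_of_pos (hx : 0 < x) (k : ℕ) :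
    baseDigit b x k = (⌈x * b ^ (k + 1)⌉ - b * ⌈x * b ^ k⌉ + ((b : ℤ) - 1)).toNat :=
  if_neg hx.not_ge

theorem mul_pow_add_eq_intCast {j : ℕ} {a : ℤ} (h : x * b ^ j = a) (d : ℕ) :
    x * b ^ (j + d) = ((a * b ^ d : ℤ) : ℝ) := by
  push_cast
  rw [pow_add, ← mul_assoc, h]

theorem baseDigit_eq_pred_of_mul_pow_eq (hb : 0 < b) (hx : 0 < x) {j : ℕ} {a : ℤ}
    (h : x * b ^ j = a) {k : ℕ} (hjk : j ≤ k) : baseDigit b x k = b - 1 := by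
  obtain ⟨d, rfl⟩ := Nat.exists_eq_add_of_le hjk
  rw [baseDigit_of_pos hx, add_assoc, mul_pow_add_eq_intCast h, mul_pow_add_eq_intCast h,
    Int.ceil_intCast, Int.ceil_intCast, ← Int.toNat_natCast (b - 1)]
  congr 1
  push_cast [Nat.cast_sub hb]
  ring

theorem kappaBase_natCast_div_pow (hb : 0 < b) (m j : ℕ) : kappaBase b (m / b ^ j) = 0 := by
  rw [kappaBase_eq_zero_iff]
  rcases m.eq_zero_or_pos with rfl | hm
  · exact containsPowInf_of_eventually_const (i := 0) (fun k _ => baseDigit_of_nonpos (by simp) k)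
  · have hb' : (0 : ℝ) < b ^ j := by positivity
    exact containsPowInf_of_eventually_const fun k hk =>
      baseDigit_eq_pred_of_mul_pow_eq hb (by positivity) (j := j) (a := m)
        (by simp [hb'.ne']) hk

theorem eventually_baseDigit_eq_of_ceil {l : Filter ℝ} (hl : l ≤ 𝓝 x) (hx : 0 < x)
    (h : ∀ t : ℕ, ∀ᶠ y : ℝ in l, ⌈y * b ^ t⌉ = ⌈x * b ^ t⌉) (M : ℕ) :
    ∀ᶠ y in l, ∀ k < M, baseDigit b y k = baseDigit b x k := by
  have hceil : ∀ᶠ y : ℝ in l, ∀ t ∈ Finset.range (M + 1), ⌈y * b ^ t⌉ = ⌈x * b ^ t⌉ :=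
    (eventually_all_finset _).2 fun t _ => h t
  filter_upwards [hceil, hl (Ioi_mem_nhds hx)] with y hy hy0 k hk
  rw [baseDigit_of_pos hx, baseDigit_of_pos hy0, hy k (by simp; omega),
    hy (k + 1) (by simp; omega)]

theorem eventually_nhdsLE_baseDigit_eq (b : ℕ) (x : ℝ) (M : ℕ) :
    ∀ᶠ y in 𝓝[≤] x, ∀ k < M, baseDigit b y k = baseDigit b x k := by
  rcases le_or_gt x 0 with hx | hx
  · filter_upwards [self_mem_nhdsWithin] with y hy k _
    rw [baseDigit_of_nonpos hx, baseDigit_of_nonpos (le_trans hy hx)]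
  · exact eventually_baseDigit_eq_of_ceil nhdsWithin_le_nhds hx
      (fun t => eventually_ceil_mul_eq_nhdsLE (by positivity) x) M

theorem eventually_nhdsGT_baseDigit_eq (hb : 0 < b)
    (hx : ∀ j : ℕ, x * b ^ j ∉ Set.range ((↑) : ℤ → ℝ)) (M : ℕ) :
    ∀ᶠ y in 𝓝[>] x, ∀ k < M, baseDigit b y k = baseDigit b x k := by
  rcases lt_trichotomy x 0 with hx0 | rfl | hx0
  · filter_upwards [nhdsWithin_le_nhds (Iio_mem_nhds hx0)] with y hy k _
    rw [baseDigit_of_nonpos hx0.le, baseDigit_of_nonpos (le_of_lt hy)]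
  · exact absurd ⟨0, by simp⟩ (hx 0)
  · refine eventually_baseDigit_eq_of_ceil nhdsWithin_le_nhds hx0 (fun t => ?_) M
    rw [(Int.ceil_eq_floor_add_one_iff_notMem _).2 (hx t)]
    exact eventually_ceil_mul_eq_nhdsGT (by positivity) x

theorem eventually_nhdsGT_baseDigit_eq_zero (hb : 0 < b) {j : ℕ} {a : ℤ} (h : x * b ^ j = a)
    (n : ℕ) : ∀ᶠ y in 𝓝[>] x, ∀ k < n, baseDigit b y (j + k) = 0 := by
  have hceil : ∀ᶠ y : ℝ in 𝓝[>] x, ∀ t ∈ Finset.range (n + 1),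
      ⌈y * b ^ (j + t)⌉ = a * b ^ t + 1 := by
    refine (eventually_all_finset _).2 fun t _ => ?_
    simpa only [mul_pow_add_eq_intCast h, Int.floor_intCast] using
      eventually_ceil_mul_eq_nhdsGT (by positivity : (0 : ℝ) < b ^ (j + t)) x
  filter_upwards [hceil] with y hy k hk
  rcases le_or_gt y 0 with hy0 | hy0
  · exact baseDigit_of_nonpos hy0 _
  · rw [baseDigit_of_pos hy0, add_assoc, hy k (by simp; omega), hy (k + 1) (by simp; omega)]
    exact Int.toNat_eq_zero.2 (le_of_eq (by ring))

end Digits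

section Continuity

variable {b : ℕ} {x : ℝ}

theorem eventually_containsPowInf (hb : 0 < b) (h : ∀ r : ℚ, ContainsPowInf (baseDigit b x) r)
    (r : ℚ) : ∀ᶠ y in 𝓝 x, ContainsPowInf (baseDigit b y) r := by
  obtain ⟨M, hM⟩ := (h r).exists_forall_agree
  rw [← nhdsLE_sup_nhdsGT, eventually_sup]
  refine ⟨(eventually_nhdsLE_baseDigit_eq b x M).mono fun y hy => hM _ hy, ?_⟩
  by_cases hadic : ∃ j : ℕ, x * b ^ j ∈ Set.range ((↑) : ℤ → ℝ)
  · obtain ⟨j, a, ha⟩ := hadic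
    obtain ⟨n, hn⟩ := exists_nat_gt r
    filter_upwards [eventually_nhdsGT_baseDigit_eq_zero hb ha.symm (n + 1)] with y hy
    exact (containsPowInf_of_run n.succ_pos hy).mono (by push_cast; linarith)
  · exact (eventually_nhdsGT_baseDigit_eq hb (fun j hj => hadic ⟨j, hj⟩) M).mono
      fun y hy => hM _ hy

theorem continuousAt_kappaBase_of_eq_zero (hb : 0 < b) (h : kappaBase b x = 0) :
    ContinuousAt (kappaBase b) x := by
  rw [ContinuousAt, h, tendsto_order]
  refine ⟨fun ε hε => .of_forall fun y => hε.trans_le (kappaBase_nonneg b y), fun ε hε => ?_⟩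
  obtain ⟨r, hr⟩ := exists_rat_gt (1 / ε)
  have hr0 : (0 : ℝ) < r := (one_div_pos.2 hε).trans hr
  filter_upwards [eventually_containsPowInf hb (kappaBase_eq_zero_iff.1 h) r] with y hy
  calc kappaBase b y ≤ 1 / r := kappaBase_le_of_containsPowInf (by exact_mod_cast hr0) hy
    _ < ε := (one_div_lt hr0 hε).2 hr

theorem kappaBase_eq_zero_of_continuousWithinAt (hb : 1 < b) (hx : x ∈ Set.Icc (0 : ℝ) 1)
    (h : ContinuousWithinAt (kappaBase b) (Set.Icc 0 1) x) : kappaBase b x = 0 := by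
  have hb' : (1 : ℝ) < b := by exact_mod_cast hb
  set d : ℕ → ℝ := fun n => ⌊x * (b : ℝ) ^ n⌋₊ / (b : ℝ) ^ n
  have hd : Tendsto d atTop (𝓝 x) :=
    (tendsto_nat_floor_mul_div_atTop hx.1).comp (tendsto_pow_atTop_atTop_of_one_lt hb')
  have hdI : ∀ n, d n ∈ Set.Icc (0 : ℝ) 1 := fun n =>
    ⟨by positivity, ((div_le_iff₀ (by positivity)).2
      (Nat.floor_le (mul_nonneg hx.1 (by positivity)))).trans hx.2⟩
  have hκd : kappaBase b ∘ d = fun _ => 0 :=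
    funext fun n => kappaBase_natCast_div_pow (by omega) _ n
  have := h.tendsto.comp (tendsto_nhdsWithin_iff.2 ⟨hd, .of_forall hdI⟩)
  rw [hκd] at this
  exact tendsto_nhds_unique this tendsto_const_nhds

end Continuity

theorem stmt_5 (x : ℝ) (hx : x ∈ Set.Icc (0 : ℝ) 1) :
    ContinuousWithinAt kappa2 (Set.Icc (0 : ℝ) 1) x ↔ kappa2 x = 0 :=
  ⟨kappaBase_eq_zero_of_continuousWithinAt one_lt_two hx,
    fun h => (continuousAt_kappaBase_of_eq_zero two_pos h).continuousWithinAt⟩
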